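/- For every n × N 0-1 matrix M with n ≤ N, the maximum homogeneous staircase length satisfies st(M) ≥ ⌈(⌈n/2⌉ + N − 1)/2⌉. -/

import Mathlib

/-!
Let `v` be the majority value of the first column and `i` the last row holding `v` there. The
`v`-entries of the first column followed by the `v`-entries of row `i` right of it form a
`v`-staircase, and the remaining entries of row `i` right of the first column form a
`(v + 1)`-staircase. Their lengths add up to at least `⌈n/2⌉ + N - 1`, so the longer one is at
least half of that.
-/

/-- A step of a staircase: the next position is strictly to the right in the
same row, or strictly below in the same column. -/
def Step {n N : ℕ} (p q : Fin n × Fin N) : Prop :=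
  (p.1 = q.1 ∧ p.2 < q.2) ∨ (p.2 = q.2 ∧ p.1 < q.1)

/-- A `v`-staircase in the 0-1 matrix `M`: a sequence of positions all holding
the value `v`, each successive one strictly to the right in the same row or
strictly below in the same column of the previous one. -/
def IsStaircase {n N : ℕ} (M : Fin n → Fin N → Fin 2) (v : Fin 2)
    (L : List (Fin n × Fin N)) : Prop :=
  (∀ p ∈ L, M p.1 p.2 = v) ∧ L.Chain' Step

open Finset

lemma card_filter_eq_add_card_filter_eq_add_one {α : Type*} (s : Finset α) (f : α → Fin 2)
    (v : Fin 2) : #{x ∈ s | f x = v} + #{x ∈ s | f x = v + 1} = #s := by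
  have hne : ∀ x : Fin 2, x ≠ v ↔ x = v + 1 := by revert v; decide
  simp only [← hne]
  exact card_filter_add_card_filter_not _

namespace Staircase

variable {n N : ℕ}

def columnCells (s : Finset (Fin n)) (j : Fin N) : List (Fin n × Fin N) :=
  s.sort.map (·, j)

def rowCells (i : Fin n) (t : Finset (Fin N)) : List (Fin n × Fin N) :=
  t.sort.map (i, ·)

@[simp]
lemma length_columnCells (s : Finset (Fin n)) (j : Fin N) : (columnCells s j).length = #s := by
  simp [columnCells]

@[simp]
lemma length_rowCells (i : Fin n) (t : Finset (Fin N)) : (rowCells i t).length = #t := by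
  simp [rowCells]

lemma isChain_columnCells (s : Finset (Fin n)) (j : Fin N) :
    (columnCells s j).IsChain Step :=
  List.isChain_map _ |>.2 <| s.sortedLT_sort.isChain.imp fun _ _ h => Or.inr ⟨rfl, h⟩

lemma isChain_rowCells (i : Fin n) (t : Finset (Fin N)) : (rowCells i t).IsChain Step :=
  List.isChain_map _ |>.2 <| t.sortedLT_sort.isChain.imp fun _ _ h => Or.inl ⟨rfl, h⟩

lemma isStaircase_rowCells {M : Fin n → Fin N → Fin 2} {v : Fin 2} {i : Fin n}
    {t : Finset (Fin N)} (ht : ∀ k ∈ t, M i k = v) : IsStaircase M v (rowCells i t) := by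
  refine ⟨?_, isChain_rowCells i t⟩
  simp only [rowCells, List.mem_map, mem_sort]
  rintro _ ⟨k, hk, rfl⟩
  exact ht k hk

lemma isStaircase_hook {M : Fin n → Fin N → Fin 2} {v : Fin 2} {s : Finset (Fin n)} {i : Fin n}
    {j : Fin N} {t : Finset (Fin N)} (hs : ∀ r ∈ s, r < i ∧ M r j = v) (hij : M i j = v)
    (ht : ∀ k ∈ t, j < k ∧ M i k = v) :
    IsStaircase M v (columnCells s j ++ (i, j) :: rowCells i t) := by
  refine ⟨?_, ?_⟩
  · simp only [columnCells, rowCells, List.mem_append, List.mem_cons, List.mem_map, mem_sort]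
    rintro _ (⟨r, hr, rfl⟩ | rfl | ⟨k, hk, rfl⟩)
    exacts [(hs r hr).2, hij, (ht k hk).2]
  · refine List.isChain_append.2 ⟨isChain_columnCells s j,
      List.isChain_cons.2 ⟨?_, isChain_rowCells i t⟩, ?_⟩
    · intro y hy
      obtain ⟨k, hk, rfl⟩ := List.mem_map.1 (List.mem_of_mem_head? hy)
      exact Or.inl ⟨rfl, (ht k ((mem_sort _).1 hk)).1⟩
    · intro x hx y hy
      obtain ⟨r, hr, rfl⟩ := List.mem_map.1 (List.mem_of_mem_getLast? hx)
      obtain rfl : (i, j) = y := by simpa using hy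
      exact Or.inr ⟨rfl, (hs r ((mem_sort _).1 hr)).1⟩

theorem exists_isStaircase_add_one_length_add (hn : 0 < n) (hN : 0 < N)
    (M : Fin n → Fin N → Fin 2) :
    ∃ v L₁ L₂, IsStaircase M v L₁ ∧ IsStaircase M (v + 1) L₂ ∧
      (n + 1) / 2 + N - 1 ≤ L₁.length + L₂.length := by
  set j : Fin N := ⟨0, hN⟩
  obtain ⟨v, hv⟩ : ∃ v, (n - 1) / 2 < #{r | M r j = v} :=
    Fintype.exists_lt_card_fiber_of_mul_lt_card _ (by rw [Fintype.card_fin, Fintype.card_fin]; omega)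
  set S : Finset (Fin n) := {r | M r j = v}
  have hS : S.Nonempty := card_pos.1 (by omega)
  set i := S.max' hS
  have hi : i ∈ S := S.max'_mem hS
  set T : Fin 2 → Finset (Fin N) := fun u => {k ∈ Ioi j | M i k = u}
  refine ⟨v, columnCells (S.erase i) j ++ (i, j) :: rowCells i (T v), rowCells i (T (v + 1)),
    isStaircase_hook ?_ (mem_filter.1 hi).2 ?_, isStaircase_rowCells ?_, ?_⟩
  · exact fun r hr => ⟨S.lt_max'_of_mem_erase_max' hS hr, (mem_filter.1 (mem_of_mem_erase hr)).2⟩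
  · exact fun k hk => by simpa [T] using hk
  · exact fun k hk => (mem_filter.1 hk).2
  · have hcol := card_erase_add_one hi
    have hrow : #(T v) + #(T (v + 1)) = N - 1 := by
      simpa [T, j] using card_filter_eq_add_card_filter_eq_add_one (Ioi j) (M i) v
    simp only [List.length_append, List.length_cons, length_columnCells, length_rowCells]
    omega

end Staircase

theorem stmt5 (n N : ℕ) (hn : 1 ≤ n) (hnN : n ≤ N) (M : Fin n → Fin N → Fin 2) :
    ∃ (v : Fin 2) (L : List (Fin n × Fin N)),
      IsStaircase M v L ∧ ((n + 1) / 2 + N - 1 + 1) / 2 ≤ L.length := by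
  obtain ⟨v, L₁, L₂, h₁, h₂, hlen⟩ :=
    Staircase.exists_isStaircase_add_one_length_add hn (hn.trans hnN) M
  by_cases hL₁ : ((n + 1) / 2 + N - 1 + 1) / 2 ≤ L₁.length
  · exact ⟨v, L₁, h₁, hL₁⟩
  · exact ⟨v + 1, L₂, h₂, by omega⟩
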